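/- (Reconstruction property) In the setting of the greedy selection map c of the previous statement, suppose additionally that a synthesis map L assigns to each finite list T a decision L(T), and define A(D) = L(c(D)) where c(D) is the training list produced by the greedy run on D. Then A(c(D)) = A(D), i.e., running the full procedure on only the compressed multiset c(D) reconstructs the same decision as running it on all of D. -/

import Mathlib

/-!
Every element chosen by the greedy run on `D` lies in its output `T` and stays maximal among the
remaining elements of `T`, so the same choices form a greedy run on `T` with output `T` (its
stopping condition is vacuous since `T - T = 0`). Since the preference is asymmetric, the maximal
remaining element is unique at each step, so greedy runs are deterministic and `c(c(D)) = c(D)`.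
-/

/-- One run of the greedy selection meta-algorithm: `GreedyRun lt D T T'` means that,
starting from the current training multiset `T`, the greedy loop on dataset `D`
terminates with output `T'` (see the preference-property statement). -/
inductive GreedyRun {𝒵 : Type*} [DecidableEq 𝒵]
    (lt : Multiset 𝒵 → Option 𝒵 → Option 𝒵 → Prop)
    (D : Multiset 𝒵) : Multiset 𝒵 → Multiset 𝒵 → Prop
  | done (T : Multiset 𝒵) (hstop : ∀ z ∈ D - T, ¬ lt T none (some z)) :
      GreedyRun lt D T T
  | step (T : Multiset 𝒵) (z : 𝒵) (T' : Multiset 𝒵)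
      (hcond : ∃ y ∈ D - T, lt T none (some y))
      (hmem : z ∈ D - T)
      (hmax : ∀ y ∈ D - T, y ≠ z → lt T (some y) (some z))
      (hrest : GreedyRun lt D (z ::ₘ T) T') :
      GreedyRun lt D T T'

namespace Multiset

variable {α : Type*} [DecidableEq α] {a : α} {s t : Multiset α}

theorem cons_le_of_mem_sub (hst : s ≤ t) (ha : a ∈ t - s) : a ::ₘ s ≤ t := by
  rw [← singleton_add, ← tsub_add_cancel_of_le hst]
  exact add_le_add_left (singleton_le.mpr ha) s

theorem mem_sub_of_cons_le (h : a ::ₘ s ≤ t) : a ∈ t - s :=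
  singleton_le.mp (le_tsub_of_add_le_right (by rwa [singleton_add]))

end Multiset

namespace GreedyRun

variable {𝒵 : Type*} [DecidableEq 𝒵] {lt : Multiset 𝒵 → Option 𝒵 → Option 𝒵 → Prop}
  {D U T : Multiset 𝒵}

theorem start_le (h : GreedyRun lt D U T) : U ≤ T := by
  induction h with
  | done => exact le_rfl
  | step U z T _ _ _ _ ih => exact (Multiset.le_cons_self U z).trans ih

theorem le_dataset (h : GreedyRun lt D U T) (hU : U ≤ D) : T ≤ D := by
  induction h with
  | done => exact hU
  | step U z T _ hmem _ _ ih => exact ih (Multiset.cons_le_of_mem_sub hU hmem)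

theorem unique
    (hasymm : ∀ (U : Multiset 𝒵) (y z : 𝒵), lt U (some y) (some z) → ¬ lt U (some z) (some y))
    {T' : Multiset 𝒵} (h : GreedyRun lt D U T) (h' : GreedyRun lt D U T') : T = T' := by
  induction h generalizing T' with
  | done U hstop =>
    cases h' with
    | done => rfl
    | step _ _ _ hcond => obtain ⟨y, hy, hly⟩ := hcond; exact absurd hly (hstop y hy)
  | step U z T hcond hmem hmax _ ih =>
    cases h' with
    | done _ hstop => obtain ⟨y, hy, hly⟩ := hcond; exact absurd hly (hstop y hy)
    | step _ z' _ _ hmem' hmax' hrest' =>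
      obtain rfl : z = z' := by
        by_contra hne
        exact hasymm U z z' (hmax' z hmem hne) (hmax z' hmem' (Ne.symm hne))
      exact ih hrest'

theorem restrict_to_output
    (htrans : ∀ (U : Multiset 𝒵) (a b c : Option 𝒵), lt U a b → lt U b c → lt U a c)
    (h : GreedyRun lt D U T) (hTD : T ≤ D) : GreedyRun lt T U T := by
  induction h with
  | done U _ => exact .done U (by simp)
  | step U z T hcond _ hmax hrest ih =>
    have hzT : z ∈ T - U := Multiset.mem_sub_of_cons_le hrest.start_le
    have hz : lt U none (some z) := by
      obtain ⟨y, hy, hly⟩ := hcond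
      rcases eq_or_ne y z with rfl | hne
      · exact hly
      · exact htrans U _ _ _ hly (hmax y hy hne)
    exact .step U z T ⟨z, hzT, hz⟩ hzT
      (fun y hy hne => hmax y (Multiset.mem_of_le (tsub_le_tsub_right hTD U) hy) hne) (ih hTD)

end GreedyRun

theorem greedy_reconstruction_general {𝒵 ℋ : Type*} [DecidableEq 𝒵]
    (lt : Multiset 𝒵 → Option 𝒵 → Option 𝒵 → Prop)
    (hirrefl : ∀ (T : Multiset 𝒵) (a : Option 𝒵), ¬ lt T a a)
    (htrans : ∀ (T : Multiset 𝒵) (a b c : Option 𝒵), lt T a b → lt T b c → lt T a c)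
    (L : Multiset 𝒵 → ℋ)
    (D T T' : Multiset 𝒵)
    (hrunD : GreedyRun lt D 0 T)
    (hrunT : GreedyRun lt T 0 T') :
    L T' = L T := by
  have hTD : T ≤ D := hrunD.le_dataset (Multiset.zero_le D)
  have hasymm : ∀ (U : Multiset 𝒵) (y z : 𝒵), lt U (some y) (some z) → ¬ lt U (some z) (some y) :=
    fun U y z hyz hzy => hirrefl U _ (htrans U _ _ _ hyz hzy)
  rw [hrunT.unique hasymm (hrunD.restrict_to_output htrans hTD)]

/-- Reconstruction property: with `A(D) = L(c(D))`, running the full procedure on only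
the compressed multiset `c(D)` reconstructs the same decision: `A(c(D)) = A(D)`.
Formally, if the greedy run on `D` outputs `T` (so `c(D) = T`) and the greedy run on `T`
outputs `T'` (so `c(c(D)) = T'`), then `L T' = L T`. -/
theorem greedy_reconstruction {𝒵 ℋ : Type*} [DecidableEq 𝒵]
    (lt : Multiset 𝒵 → Option 𝒵 → Option 𝒵 → Prop)
    (hirrefl : ∀ (T : Multiset 𝒵) (a : Option 𝒵), ¬ lt T a a)
    (htrans : ∀ (T : Multiset 𝒵) (a b c : Option 𝒵), lt T a b → lt T b c → lt T a c)
    (htrichot : ∀ (T : Multiset 𝒵) (a b : Option 𝒵), lt T a b ∨ a = b ∨ lt T b a)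
    (L : Multiset 𝒵 → ℋ)
    (D T T' : Multiset 𝒵)
    (hrunD : GreedyRun lt D 0 T)
    (hrunT : GreedyRun lt T 0 T') :
    L T' = L T :=
  greedy_reconstruction_general lt hirrefl htrans L D T T' hrunD hrunT
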